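/- arXiv:2212.04454 — 3 statements merged into one kernel-verified Lean document; each statement's English description precedes it below -/
import Mathlib

section
/- Let τ ≥ 2 be an integer, let ε and β be real numbers, and let Δ : {1,…,τ} → ℝ. Define q_j = exp(−Δ_j)/Σ_{t=1}^{τ} exp(−Δ_t), the keep probability p = exp(β)/(exp(β)+τ−1), and the flip probabilities Q_j = ((τ−1)/(exp(β)+τ−1))·q_j. If β ≤ ε + log(τ−1) + log(min_{1≤j≤τ} q_j), then for every j ∈ {1,…,τ}, p ≤ exp(ε)·Q_j; that is, the largest output probability of the XRand randomized-response step is at most exp(ε) times each flip probability, so any ratio of the keep probability to a flip probability is bounded by exp(ε). -/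
open Real Finset

/-- **XRand keep/flip probability ratio bound.**
If `β ≤ ε + log (τ-1) + log (min_j q_j)` then the keep probability
`p = exp β / (exp β + τ - 1)` is at most `exp ε` times each flip probability
`Q j = ((τ-1)/(exp β + τ - 1)) * q j`, where
`q j = exp (-Δ j) / ∑ t, exp (-Δ t)`. -/
theorem xrand_ldp_ratio_bound
    (τ : ℕ) (hτ : 2 ≤ τ) (ε β : ℝ) (Δ : Fin τ → ℝ)
    (q : Fin τ → ℝ)
    (hq : ∀ j, q j = Real.exp (-Δ j) / ∑ t : Fin τ, Real.exp (-Δ t))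
    (p : ℝ) (hp : p = Real.exp β / (Real.exp β + (τ : ℝ) - 1))
    (Q : Fin τ → ℝ)
    (hQ : ∀ j, Q j = (((τ : ℝ) - 1) / (Real.exp β + (τ : ℝ) - 1)) * q j)
    (hβ : β ≤ ε + Real.log ((τ : ℝ) - 1) +
      Real.log ((Finset.univ.inf' (Finset.univ_nonempty_iff.mpr
        ⟨⟨0, by omega⟩⟩) q))) :
    ∀ j : Fin τ, p ≤ Real.exp ε * Q j := by
  intro j
  have hτ1 : (1 : ℝ) ≤ (τ : ℝ) - 1 := by
    have : (2 : ℝ) ≤ (τ : ℝ) := by exact_mod_cast hτ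
    linarith
  have hqpos : ∀ i : Fin τ, 0 < q i := by
    intro i
    rw [hq]
    apply div_pos (Real.exp_pos _)
    exact Finset.sum_pos (fun t _ => Real.exp_pos _) ⟨i, Finset.mem_univ i⟩
  set m := Finset.univ.inf' (Finset.univ_nonempty_iff.mpr
        ⟨(⟨0, by omega⟩ : Fin τ)⟩) q with hm
  have hmpos : 0 < m := by
    obtain ⟨i, _, hi⟩ := Finset.exists_mem_eq_inf' (Finset.univ_nonempty_iff.mpr
        ⟨(⟨0, by omega⟩ : Fin τ)⟩) q
    rw [hm, hi]; exact hqpos i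
  have hmle : m ≤ q j := Finset.inf'_le _ (Finset.mem_univ j)
  have hD : 0 < Real.exp β + (τ : ℝ) - 1 := by
    have := Real.exp_pos β; linarith
  have hkey : Real.exp β ≤ Real.exp ε * (((τ : ℝ) - 1) * q j) := by
    have h1 : Real.exp β ≤ Real.exp (ε + Real.log ((τ : ℝ) - 1) + Real.log m) :=
      Real.exp_le_exp.mpr hβ
    have h2 : Real.exp (ε + Real.log ((τ : ℝ) - 1) + Real.log m)
        = Real.exp ε * (((τ : ℝ) - 1) * m) := by
      rw [Real.exp_add, Real.exp_add, Real.exp_log (by linarith), Real.exp_log hmpos,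
        mul_assoc]
    calc Real.exp β ≤ Real.exp ε * (((τ : ℝ) - 1) * m) := h2 ▸ h1
      _ ≤ Real.exp ε * (((τ : ℝ) - 1) * q j) := by
          apply mul_le_mul_of_nonneg_left _ (Real.exp_pos ε).le
          exact mul_le_mul_of_nonneg_left hmle (by linarith)
  rw [hp, hQ j, div_le_iff₀ hD]
  calc Real.exp β ≤ Real.exp ε * (((τ : ℝ) - 1) * q j) := hkey
    _ = Real.exp ε * (((τ : ℝ) - 1) / (Real.exp β + (τ : ℝ) - 1) * q j)
        * (Real.exp β + (τ : ℝ) - 1) := by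
        field_simp
end

section
/- Let P and Q be probability measures on a measurable space Ω, and let ε ≥ 0 and δ ≥ 0 be real numbers such that for every measurable set S ⊆ Ω, P(S) ≤ exp(ε)·Q(S) + δ. Then for every measurable function g : Ω → ℝ with 0 ≤ g ≤ 1, the expectations satisfy ∫ g dP ≤ exp(ε)·∫ g dQ + δ. -/
open Real MeasureTheory

/-!
By the layer-cake formula, `∫ g dμ = ∫₀¹ μ {g ≥ t} dt` for `g` with values in `[0, 1]`. Applying the
event bound to each superlevel set `{g ≥ t}` and integrating over `t ∈ (0, 1]`, an interval of
length one, turns `P {g ≥ t} ≤ c · Q {g ≥ t} + δ` into `∫ g dP ≤ c · ∫ g dQ + δ`.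
-/

namespace MeasureTheory

variable {Ω : Type*} [MeasurableSpace Ω]

lemma integrableOn_Ioc_measureReal_le (μ : Measure Ω) [IsFiniteMeasure μ] (g : Ω → ℝ)
    (a b : ℝ) : IntegrableOn (fun t ↦ μ.real {ω | t ≤ g ω}) (Set.Ioc a b) := by
  have hanti : Antitone fun t ↦ μ.real {ω | t ≤ g ω} :=
    fun _ _ hst ↦ measureReal_mono fun _ hω ↦ hst.trans hω
  exact ((hanti.antitoneOn _).integrableOn_isCompact isCompact_Icc).mono_set Set.Ioc_subset_Icc_self

lemma integral_eq_setIntegral_Ioc_measureReal_le (μ : Measure Ω) [IsFiniteMeasure μ]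
    {g : Ω → ℝ} (hg : AEStronglyMeasurable g μ) (hg0 : ∀ ω, 0 ≤ g ω) (hg1 : ∀ ω, g ω ≤ 1) :
    ∫ ω, g ω ∂μ = ∫ t in Set.Ioc 0 1, μ.real {ω | t ≤ g ω} := by
  have hint : Integrable g μ :=
    .of_bound hg 1 (.of_forall fun ω ↦ by rw [norm_of_nonneg (hg0 ω)]; exact hg1 ω)
  exact hint.integral_eq_integral_Ioc_meas_le (.of_forall hg0) (.of_forall hg1)

lemma integral_le_mul_integral_add_of_measureReal_le {P Q : Measure Ω} [IsFiniteMeasure P]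
    [IsFiniteMeasure Q] {c δ : ℝ}
    (h : ∀ S, MeasurableSet S → P.real S ≤ c * Q.real S + δ) {g : Ω → ℝ} (hg : Measurable g)
    (hg0 : ∀ ω, 0 ≤ g ω) (hg1 : ∀ ω, g ω ≤ 1) :
    ∫ ω, g ω ∂P ≤ c * ∫ ω, g ω ∂Q + δ := by
  rw [integral_eq_setIntegral_Ioc_measureReal_le P hg.aestronglyMeasurable hg0 hg1,
    integral_eq_setIntegral_Ioc_measureReal_le Q hg.aestronglyMeasurable hg0 hg1]
  have hQ := (integrableOn_Ioc_measureReal_le Q g 0 1).const_mul c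
  have hδ : IntegrableOn (fun _ ↦ δ) (Set.Ioc (0 : ℝ) 1) :=
    integrableOn_const measure_Ioc_lt_top.ne
  calc ∫ t in Set.Ioc 0 1, P.real {ω | t ≤ g ω}
      ≤ ∫ t in Set.Ioc 0 1, (c * Q.real {ω | t ≤ g ω} + δ) :=
        setIntegral_mono_on (integrableOn_Ioc_measureReal_le P g 0 1) (hQ.add hδ)
          measurableSet_Ioc fun t _ ↦ h _ (measurableSet_le measurable_const hg)
    _ = c * (∫ t in Set.Ioc 0 1, Q.real {ω | t ≤ g ω}) + δ := by
        rw [integral_add hQ hδ, integral_const_mul, setIntegral_const]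
        simp

end MeasureTheory

theorem dp_events_to_expectations_general {Ω : Type*} [MeasurableSpace Ω]
    (P Q : Measure Ω) [IsProbabilityMeasure P] [IsProbabilityMeasure Q]
    (ε δ : ℝ)
    (hDP : ∀ S : Set Ω, MeasurableSet S →
      (P S).toReal ≤ Real.exp ε * (Q S).toReal + δ)
    (g : Ω → ℝ) (hg : Measurable g)
    (hg0 : ∀ ω, 0 ≤ g ω) (hg1 : ∀ ω, g ω ≤ 1) :
    ∫ ω, g ω ∂P ≤ Real.exp ε * ∫ ω, g ω ∂Q + δ :=
  integral_le_mul_integral_add_of_measureReal_le hDP hg hg0 hg1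

/-- **(ε, δ)-DP condition extends from events to [0,1]-valued expectations.**
If `P S ≤ exp ε * Q S + δ` for every measurable set `S`, then for every
measurable `g : Ω → ℝ` with `0 ≤ g ≤ 1` we have
`∫ g dP ≤ exp ε * ∫ g dQ + δ`. -/
theorem dp_events_to_expectations {Ω : Type*} [MeasurableSpace Ω]
    (P Q : Measure Ω) [IsProbabilityMeasure P] [IsProbabilityMeasure Q]
    (ε δ : ℝ) (hε : 0 ≤ ε) (hδ : 0 ≤ δ)
    (hDP : ∀ S : Set Ω, MeasurableSet S →
      (P S).toReal ≤ Real.exp ε * (Q S).toReal + δ)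
    (g : Ω → ℝ) (hg : Measurable g)
    (hg0 : ∀ ω, 0 ≤ g ω) (hg1 : ∀ ω, g ω ≤ 1) :
    ∫ ω, g ω ∂P ≤ Real.exp ε * ∫ ω, g ω ∂Q + δ :=
  dp_events_to_expectations_general P Q ε δ hDP g hg hg0 hg1
end

section
/- Let a, a', b, b', ε, δ be real numbers with ε ≥ 0 and δ ≥ 0. If a ≤ exp(ε)·a' + δ, b' ≤ exp(ε)·b + δ, and a > exp(2ε)·b + (1 + exp(ε))·δ, then a' > b'. (Applied with a = E[f_l(x)], a' = E[f_l(x+α)], b = E[f_{¬l}(x)], b' = E[f_{¬l}(x+α)], this shows that the PixelDP certified-robustness check E[f_l(x)] > exp(2ε)·E[f_{¬l}(x)] + (1+exp(ε))·δ guarantees that the prediction on x cannot be changed by any perturbation α within the certified norm ball.) -/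
open Real

/-- **PixelDP certified-robustness check.** If `a ≤ exp ε * a' + δ`,
`b' ≤ exp ε * b + δ`, and `a > exp (2ε) * b + (1 + exp ε) * δ`,
then `a' > b'`. -/
theorem pixeldp_robustness_check
    (a a' b b' ε δ : ℝ) (hε : 0 ≤ ε) (hδ : 0 ≤ δ)
    (h1 : a ≤ Real.exp ε * a' + δ)
    (h2 : b' ≤ Real.exp ε * b + δ)
    (h3 : a > Real.exp (2 * ε) * b + (1 + Real.exp ε) * δ) :
    a' > b' := by
  have he : Real.exp (2 * ε) = Real.exp ε * Real.exp ε := by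
    rw [two_mul, Real.exp_add]
  have hp : 0 < Real.exp ε := Real.exp_pos ε
  have key : Real.exp ε * b' < Real.exp ε * a' := by
    calc Real.exp ε * b' ≤ Real.exp ε * (Real.exp ε * b + δ) :=
          mul_le_mul_of_nonneg_left h2 hp.le
      _ < Real.exp ε * a' := by rw [he] at h3; nlinarith
  exact lt_of_mul_lt_mul_left key hp.le
end
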